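/- arXiv:1610.05714 — 6 statements merged into one kernel-verified Lean document; each statement's English description precedes it below -/
import Mathlib

section
/- For a fixed integer d ≥ 2, the sequence m_i = (d/(i+1))^{1/i} − 1 for 1 ≤ i ≤ d−1 is strictly decreasing in i, with m_{d-1} = 0. -/
theorem stmt_12 (d : ℕ) (hd : 2 ≤ d) :
    (∀ i j : ℕ, 1 ≤ i → i < j → j ≤ d - 1 →
      ((d : ℝ) / ((j : ℝ) + 1)) ^ ((1 : ℝ) / (j : ℝ)) - 1 <
        ((d : ℝ) / ((i : ℝ) + 1)) ^ ((1 : ℝ) / (i : ℝ)) - 1) ∧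
      ((d : ℝ) / (((d : ℝ) - 1) + 1)) ^ ((1 : ℝ) / ((d : ℝ) - 1)) - 1 = 0 := by
  have hd0 : (0:ℝ) < d := by
    have : 0 < d := by omega
    exact_mod_cast this
  constructor
  · intro i j hi hij hjd
    have hi0 : (0:ℝ) < i := by exact_mod_cast show 0 < i by omega
    have hj0 : (0:ℝ) < j := by exact_mod_cast show 0 < j by omega
    have hjd' : j + 1 ≤ d := by omega
    set A := (d:ℝ)/((j:ℝ)+1) with hAdef
    set B := (d:ℝ)/((i:ℝ)+1) with hBdef
    have hA : 0 < A := div_pos hd0 (by positivity)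
    have hB : 0 < B := div_pos hd0 (by positivity)
    have keyN : d^i * (i+1)^j < d^j * (j+1)^i := by
      have hdj : d^j = d^i * d^(j-i) := by rw [← pow_add]; congr 1; omega
      have h1 : (j+1)^(j-i) ≤ d^(j-i) := Nat.pow_le_pow_left hjd' _
      have h2 : (i+1)^j < (j+1)^j := Nat.pow_lt_pow_left (by omega) (by omega)
      have hpos : 0 < d^i := Nat.pow_pos (by omega)
      calc d^i * (i+1)^j < d^i * (j+1)^j := mul_lt_mul_of_pos_left h2 hpos
        _ = d^i * ((j+1)^i * (j+1)^(j-i)) := by rw [← pow_add]; congr 2; omega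
        _ ≤ d^i * ((j+1)^i * d^(j-i)) := by gcongr
        _ = d^j * (j+1)^i := by rw [hdj]; ring
    have key : A^i < B^j := by
      rw [hAdef, hBdef, div_pow, div_pow, div_lt_div_iff₀ (by positivity) (by positivity)]
      have : ((d^i * (i+1)^j : ℕ) : ℝ) < ((d^j * (j+1)^i : ℕ) : ℝ) := by exact_mod_cast keyN
      push_cast at this
      linarith
    have e1 : (A ^ ((1:ℝ)/(j:ℝ))) ^ (i*j) = A ^ i := by
      rw [← Real.rpow_natCast (A ^ ((1:ℝ)/(j:ℝ))) (i*j), ← Real.rpow_mul hA.le,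
        ← Real.rpow_natCast A i]
      congr 1
      push_cast
      field_simp
    have e2 : (B ^ ((1:ℝ)/(i:ℝ))) ^ (i*j) = B ^ j := by
      rw [← Real.rpow_natCast (B ^ ((1:ℝ)/(i:ℝ))) (i*j), ← Real.rpow_mul hB.le,
        ← Real.rpow_natCast B j]
      congr 1
      push_cast
      field_simp
    have hlt : A ^ ((1:ℝ)/(j:ℝ)) < B ^ ((1:ℝ)/(i:ℝ)) := by
      apply lt_of_pow_lt_pow_left₀ (i*j) (Real.rpow_nonneg hB.le _)
      rw [e1, e2]; exact key
    linarith
  · have h1 : ((d:ℝ) - 1) + 1 = d := by ring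
    rw [h1, div_self hd0.ne', Real.one_rpow, sub_self]
end

section
/- For d ≥ 2 and i with m_i ≤ λ < m_{i-1} where m_i = (d/(i+1))^{1/i} − 1 (and m_0 = ∞), the quantities y*_0 = λ(1+(i+1)λ)/D, y*_i = (1+λ)((i+1)(1+λ)^i − d)/D, y*_{i+1} = (1+λ)^2(d − i(1+λ)^{i-1})/D with D = (1+λ)^{i+1} + λ(d+1+(d+i+1)λ) are all nonnegative and satisfy y*_0 + y*_i + y*_{i+1} = 1. -/
/-! The two thresholds `m_i ≤ λ < m_{i-1}` give `d ≤ (i+1)(1+λ)^i` and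
`i(1+λ)^(i-1) ≤ d`, which are the signs of the numerators of `y*_i` and `y*_{i+1}`; the
numerator of `y*_0` and the denominator `D ≥ 1` are nonnegative because `λ ≥ m_i ≥ 0`, and
the three numerators sum to `D` identically. -/

lemma le_one_add_pow_of_rpow_one_div_sub_one_le {a t : ℝ} {n : ℕ} (ha : 0 ≤ a) (hn : n ≠ 0)
    (h : a ^ ((1 : ℝ) / n) - 1 ≤ t) : a ≤ (1 + t) ^ n := by
  have ht : 0 ≤ 1 + t := by linarith [Real.rpow_nonneg ha ((1 : ℝ) / n)]
  have h' : a ^ ((n : ℝ)⁻¹) ≤ 1 + t := by rw [← one_div]; linarith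
  rwa [Real.rpow_inv_le_iff_of_pos ha ht (by positivity), Real.rpow_natCast] at h'

lemma one_add_pow_lt_of_lt_rpow_one_div_sub_one {a t : ℝ} {n : ℕ} (ha : 0 ≤ a) (hn : n ≠ 0)
    (ht : 0 ≤ 1 + t) (h : t < a ^ ((1 : ℝ) / n) - 1) : (1 + t) ^ n < a := by
  have h' : 1 + t < a ^ ((n : ℝ)⁻¹) := by rw [← one_div]; linarith
  rwa [Real.lt_rpow_inv_iff_of_pos ht ha (by positivity), Real.rpow_natCast] at h'

lemma occupancy_numerators_sum {n : ℕ} (hn : 1 ≤ n) (d t : ℝ) :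
    t * (1 + ((n : ℝ) + 1) * t) + (1 + t) * (((n : ℝ) + 1) * (1 + t) ^ n - d)
      + (1 + t) ^ 2 * (d - n * (1 + t) ^ (n - 1))
      = (1 + t) ^ (n + 1) + t * (d + 1 + (d + n + 1) * t) := by
  obtain ⟨k, rfl⟩ := Nat.exists_eq_add_of_le' hn
  simp only [Nat.add_sub_cancel]
  push_cast
  ring

theorem stmt_13_general (d i : ℕ) (hi : 1 ≤ i) (hid : i ≤ d - 1) (lam : ℝ)
    (hlow : ((d : ℝ) / ((i : ℝ) + 1)) ^ ((1 : ℝ) / (i : ℝ)) - 1 ≤ lam)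
    (hhigh : 1 < i → lam < ((d : ℝ) / (i : ℝ)) ^ ((1 : ℝ) / ((i : ℝ) - 1)) - 1)
    (D y0 yi yi1 : ℝ)
    (hD : D = (1 + lam) ^ (i + 1) + lam * ((d : ℝ) + 1 + ((d : ℝ) + (i : ℝ) + 1) * lam))
    (h0 : y0 = lam * (1 + ((i : ℝ) + 1) * lam) / D)
    (h1 : yi = (1 + lam) * (((i : ℝ) + 1) * (1 + lam) ^ i - (d : ℝ)) / D)
    (h2 : yi1 = (1 + lam) ^ 2 * ((d : ℝ) - (i : ℝ) * (1 + lam) ^ (i - 1)) / D) :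
    0 ≤ y0 ∧ 0 ≤ yi ∧ 0 ≤ yi1 ∧ y0 + yi + yi1 = 1 := by
  have hi_pos : (0 : ℝ) < i := by exact_mod_cast hi
  have hdi : (i : ℝ) + 1 ≤ d := by exact_mod_cast (by omega : i + 1 ≤ d)
  have hlam : 0 ≤ lam := by
    have : 1 ≤ (d : ℝ) / (i + 1) := by rw [le_div_iff₀ (by positivity)]; linarith
    linarith [Real.one_le_rpow this (by positivity : (0 : ℝ) ≤ 1 / i)]
  have hyi : d ≤ ((i : ℝ) + 1) * (1 + lam) ^ i := by
    have := le_one_add_pow_of_rpow_one_div_sub_one_le (by positivity) (by omega) hlow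
    rwa [div_le_iff₀ (by positivity), mul_comm] at this
  have hyi1 : (i : ℝ) * (1 + lam) ^ (i - 1) ≤ d := by
    rcases hi.eq_or_lt with rfl | hi1
    · simp only [Nat.cast_one, one_mul, Nat.sub_self, pow_zero]; linarith
    · have hcast : (i : ℝ) - 1 = ((i - 1 : ℕ) : ℝ) := by rw [Nat.cast_sub hi, Nat.cast_one]
      rw [hcast] at hhigh
      have := one_add_pow_lt_of_lt_rpow_one_div_sub_one (by positivity) (by omega)
        (by linarith) (hhigh hi1)
      rw [lt_div_iff₀ hi_pos, mul_comm] at this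
      exact this.le
  have hD_pos : 0 < D := by rw [hD]; positivity
  subst h0 h1 h2
  refine ⟨by positivity, div_nonneg ?_ hD_pos.le, div_nonneg ?_ hD_pos.le, ?_⟩
  · exact mul_nonneg (by linarith) (by linarith)
  · exact mul_nonneg (by positivity) (by linarith)
  · rw [← add_div, ← add_div, occupancy_numerators_sum hi, ← hD, div_self hD_pos.ne']

theorem stmt_13 (d i : ℕ) (hd : 2 ≤ d) (hi : 1 ≤ i) (hid : i ≤ d - 1) (lam : ℝ)
    (hlow : ((d : ℝ) / ((i : ℝ) + 1)) ^ ((1 : ℝ) / (i : ℝ)) - 1 ≤ lam)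
    (hhigh : 1 < i → lam < ((d : ℝ) / (i : ℝ)) ^ ((1 : ℝ) / ((i : ℝ) - 1)) - 1)
    (D y0 yi yi1 : ℝ)
    (hD : D = (1 + lam) ^ (i + 1) + lam * ((d : ℝ) + 1 + ((d : ℝ) + (i : ℝ) + 1) * lam))
    (h0 : y0 = lam * (1 + ((i : ℝ) + 1) * lam) / D)
    (h1 : yi = (1 + lam) * (((i : ℝ) + 1) * (1 + lam) ^ i - (d : ℝ)) / D)
    (h2 : yi1 = (1 + lam) ^ 2 * ((d : ℝ) - (i : ℝ) * (1 + lam) ^ (i - 1)) / D) :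
    0 ≤ y0 ∧ 0 ≤ yi ∧ 0 ≤ yi1 ∧ y0 + yi + yi1 = 1 :=
  stmt_13_general d i hi hid lam hlow hhigh D y0 yi yi1 hD h0 h1 h2
end

section
/- With notation as above (m_i ≤ λ < m_{i-1}), the values y*_0, y*_i, y*_{i+1} satisfy the constraint Σ_j (j − d(1+λ)^{-j}) y*_j = 0, i.e., (0 − d)y*_0 + (i − d(1+λ)^{-i})y*_i + (i+1 − d(1+λ)^{-(i+1)})y*_{i+1} = 0. -/
theorem stmt_14 (d i : ℕ) (hd : 2 ≤ d) (hi : 1 ≤ i) (hid : i ≤ d - 1) (lam : ℝ)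
    (hlam : 0 < lam)
    (hlow : ((d : ℝ) / ((i : ℝ) + 1)) ^ ((1 : ℝ) / (i : ℝ)) - 1 ≤ lam)
    (hhigh : 1 < i → lam < ((d : ℝ) / (i : ℝ)) ^ ((1 : ℝ) / ((i : ℝ) - 1)) - 1)
    (D y0 yi yi1 : ℝ)
    (hD : D = (1 + lam) ^ (i + 1) + lam * ((d : ℝ) + 1 + ((d : ℝ) + (i : ℝ) + 1) * lam))
    (h0 : y0 = lam * (1 + ((i : ℝ) + 1) * lam) / D)
    (h1 : yi = (1 + lam) * (((i : ℝ) + 1) * (1 + lam) ^ i - (d : ℝ)) / D)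
    (h2 : yi1 = (1 + lam) ^ 2 * ((d : ℝ) - (i : ℝ) * (1 + lam) ^ (i - 1)) / D) :
    (0 - (d : ℝ)) * y0 + ((i : ℝ) - (d : ℝ) / (1 + lam) ^ i) * yi +
      (((i : ℝ) + 1) - (d : ℝ) / (1 + lam) ^ (i + 1)) * yi1 = 0 := by
  have hu : (0:ℝ) < 1 + lam := by linarith
  have hd' : (2:ℝ) ≤ (d:ℝ) := by exact_mod_cast hd
  have hin : (0:ℝ) ≤ (i:ℝ) := Nat.cast_nonneg i
  have hDpos : 0 < D := by
    rw [hD]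
    have hp := pow_pos hu (i + 1)
    nlinarith [mul_pos hlam hlam, mul_nonneg hlam.le hin, mul_nonneg (mul_nonneg hlam.le hlam.le) hin]
  obtain ⟨j, rfl⟩ : ∃ j, i = j + 1 := ⟨i - 1, (Nat.succ_pred_eq_of_pos hi).symm⟩
  simp only [Nat.add_sub_cancel] at h2
  subst h0 h1 h2
  have hDne : D ≠ 0 := ne_of_gt hDpos
  have hune : (1 + lam) ≠ 0 := ne_of_gt hu
  rw [hD]
  field_simp
  ring
end

section
/- Define f(0) = 1 and f(d) = (1 + (d² − d)f(d−1))/(d² + 1) for d ≥ 1 (Shearer's function). Then for every d ≥ 2, f(d) ≥ 2/(d+3). -/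
/-- Shearer's function: `f(0) = 1`, `f(d) = (1 + (d² − d) f(d−1)) / (d² + 1)`. -/
noncomputable def shearer : ℕ → ℝ
  | 0 => 1
  | d + 1 =>
      (1 + (((d : ℝ) + 1) ^ 2 - ((d : ℝ) + 1)) * shearer d) / (((d : ℝ) + 1) ^ 2 + 1)

theorem stmt_16 (d : ℕ) (hd : 2 ≤ d) : shearer d ≥ 2 / ((d : ℝ) + 3) := by
  induction d, hd using Nat.le_induction with
  | base => norm_num [shearer]
  | succ n hn ih =>
    have hn' : (2:ℝ) ≤ (n:ℝ) := by exact_mod_cast hn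
    have hx : 2 / ((n:ℝ) + 3) ≤ shearer n := ih
    have hx2 : 2 ≤ shearer n * ((n:ℝ) + 3) := by
      rw [div_le_iff₀ (by linarith)] at hx; linarith
    rw [shearer, ge_iff_le]
    push_cast
    rw [div_le_div_iff₀ (by positivity) (by positivity)]
    nlinarith [sq_nonneg ((n:ℝ) - 1), mul_nonneg (sub_nonneg.2 hn') (sub_nonneg.2 hx2)]
end

section
/- If G is a triangle-free cubic graph, v is a vertex of G, and G' is any induced subgraph of the ball N²[v] of radius 2 around v, then there is a size-preserving injection from independent sets of G' to independent sets of T_3, and hence P_{G'}(λ) ≤ P_{T_3}(λ) for all λ ≥ 0; in particular (1+λ)³/P_{G'}(λ) ≥ (1+λ)³/P_{T_3}(λ). -/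
open scoped Classical in
/-- The independence polynomial `P_G(x) = ∑_{I independent} x^{|I|}` of a finite graph. -/
noncomputable def indepPoly {V : Type*} [Fintype V] (G : SimpleGraph V) (x : ℝ) : ℝ :=
  ∑ I : Finset V, if (∀ a ∈ I, ∀ b ∈ I, ¬ G.Adj a b) then x ^ I.card else 0

/-- `T₃`: the first three levels of the infinite 3-regular tree (10 vertices:
root `0`, children `1,2,3`, grandchildren `4,…,9`). -/
def T3 : SimpleGraph (Fin 10) :=
  SimpleGraph.fromRel fun a b =>
    (a.val, b.val) ∈
      [(0, 1), (0, 2), (0, 3), (1, 4), (1, 5), (2, 6), (2, 7), (3, 8), (3, 9)]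

instance : DecidableRel T3.Adj := fun a b =>
  decidable_of_iff _ (SimpleGraph.fromRel_adj _ a b).symm

/-- A fixed enumeration of 10 vertices. -/
def psi10 {V : Type*} (v0 v1 v2 v3 v4 v5 v6 v7 v8 v9 : V) : Fin 10 → V
  | 0 => v0 | 1 => v1 | 2 => v2 | 3 => v3 | 4 => v4
  | 5 => v5 | 6 => v6 | 7 => v7 | 8 => v8 | 9 => v9

/-- General transfer lemma: an injective, adjacency-reflecting vertex map
yields the desired injection on independent sets and the polynomial inequality. -/
lemma aux_transfer {α : Type*} [Fintype α] (Gα : SimpleGraph α)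
    (φ : α → Fin 10) (hφ : Function.Injective φ)
    (hrefl : ∀ x y : α, T3.Adj (φ x) (φ y) → Gα.Adj x y) :
    ∃ f : Finset α → Finset (Fin 10),
      (∀ I : Finset α,
          (∀ a ∈ I, ∀ b ∈ I, ¬ Gα.Adj a b) →
            (∀ a ∈ f I, ∀ b ∈ f I, ¬ T3.Adj a b) ∧ (f I).card = I.card) ∧
        Set.InjOn f {I | ∀ a ∈ I, ∀ b ∈ I, ¬ Gα.Adj a b} ∧
        ∀ lam : ℝ, 0 ≤ lam → indepPoly Gα lam ≤ indepPoly T3 lam := by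
  classical
  have hind : ∀ I : Finset α, (∀ a ∈ I, ∀ b ∈ I, ¬ Gα.Adj a b) →
      ∀ a ∈ I.image φ, ∀ b ∈ I.image φ, ¬ T3.Adj a b := by
    intro I hI a ha b hb hab
    obtain ⟨x, hx, rfl⟩ := Finset.mem_image.1 ha
    obtain ⟨y, hy, rfl⟩ := Finset.mem_image.1 hb
    exact hI x hx y hy (hrefl x y hab)
  refine ⟨fun I => I.image φ, ?_, ?_, ?_⟩
  · intro I hI
    exact ⟨hind I hI, Finset.card_image_of_injective _ hφ⟩
  · exact fun I _ J _ h => Finset.image_injective hφ h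
  · intro lam hlam
    have hnn : ∀ J : Finset (Fin 10),
        0 ≤ (if (∀ a ∈ J, ∀ b ∈ J, ¬ T3.Adj a b) then lam ^ J.card else 0) := by
      intro J; split_ifs
      · exact pow_nonneg hlam _
      · exact le_refl 0
    have key : (∑ I : Finset α, if (∀ a ∈ I, ∀ b ∈ I, ¬ Gα.Adj a b) then lam ^ I.card else 0)
        ≤ ∑ J : Finset (Fin 10),
            (if (∀ a ∈ J, ∀ b ∈ J, ¬ T3.Adj a b) then lam ^ J.card else 0) := calc
      (∑ I : Finset α, if (∀ a ∈ I, ∀ b ∈ I, ¬ Gα.Adj a b) then lam ^ I.card else 0)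
        ≤ ∑ I : Finset α, (if (∀ a ∈ I.image φ, ∀ b ∈ I.image φ, ¬ T3.Adj a b)
            then lam ^ (I.image φ).card else 0) := by
          apply Finset.sum_le_sum
          intro I _
          by_cases hI : ∀ a ∈ I, ∀ b ∈ I, ¬ Gα.Adj a b
          · rw [if_pos hI, if_pos (hind I hI), Finset.card_image_of_injective _ hφ]
          · rw [if_neg hI]
            exact hnn _
      _ = ∑ J ∈ Finset.univ.image (fun I : Finset α => I.image φ),
            (if (∀ a ∈ J, ∀ b ∈ J, ¬ T3.Adj a b) then lam ^ J.card else 0) := by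
          rw [Finset.sum_image]
          intro I _ J _ h
          exact Finset.image_injective hφ h
      _ ≤ ∑ J : Finset (Fin 10),
            (if (∀ a ∈ J, ∀ b ∈ J, ¬ T3.Adj a b) then lam ^ J.card else 0) :=
          Finset.sum_le_sum_of_subset_of_nonneg (Finset.subset_univ _)
            (fun J _ _ => hnn J)
    unfold indepPoly
    refine le_trans (le_of_eq ?_) (le_trans key (le_of_eq ?_))
    · exact Finset.sum_congr rfl fun I _ => by split_ifs <;> rfl
    · exact Finset.sum_congr rfl fun J _ => by split_ifs <;> rfl

set_option maxHeartbeats 1600000 in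
theorem stmt_17 {V : Type*} [Fintype V] [DecidableEq V] (G : SimpleGraph V)
    [DecidableRel G.Adj] (hreg : G.IsRegularOfDegree 3) (htf : G.CliqueFree 3)
    (v : V) (S : Finset V)
    (hS : ∀ x ∈ S, x = v ∨ G.Adj v x ∨ ∃ w, G.Adj v w ∧ G.Adj w x) :
    ∃ f : Finset (↑S : Set V) → Finset (Fin 10),
      (∀ I : Finset (↑S : Set V),
          (∀ a ∈ I, ∀ b ∈ I, ¬ (SimpleGraph.induce (↑S : Set V) G).Adj a b) →
            (∀ a ∈ f I, ∀ b ∈ f I, ¬ T3.Adj a b) ∧ (f I).card = I.card) ∧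
        Set.InjOn f
          {I | ∀ a ∈ I, ∀ b ∈ I, ¬ (SimpleGraph.induce (↑S : Set V) G).Adj a b} ∧
        ∀ lam : ℝ, 0 ≤ lam →
          indepPoly (SimpleGraph.induce (↑S : Set V) G) lam ≤ indepPoly T3 lam := by
  classical
  -- Neighbors of v
  have hcard : (G.neighborFinset v).card = 3 := by
    rw [G.card_neighborFinset_eq_degree]; exact hreg v
  obtain ⟨u1, u2, u3, h12, h13, h23, hN⟩ := Finset.card_eq_three.1 hcard
  have hu1 : G.Adj v u1 := by
    rw [← SimpleGraph.mem_neighborFinset, hN]; simp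
  have hu2 : G.Adj v u2 := by
    rw [← SimpleGraph.mem_neighborFinset, hN]; simp
  have hu3 : G.Adj v u3 := by
    rw [← SimpleGraph.mem_neighborFinset, hN]; simp
  -- second neighbors
  have herase : ∀ u, G.Adj v u → ((G.neighborFinset u).erase v).card = 2 := by
    intro u hu
    rw [Finset.card_erase_of_mem (by rw [SimpleGraph.mem_neighborFinset]; exact hu.symm),
      G.card_neighborFinset_eq_degree, hreg u]
  obtain ⟨a1, b1, hab1, hE1⟩ := Finset.card_eq_two.1 (herase u1 hu1)
  obtain ⟨a2, b2, hab2, hE2⟩ := Finset.card_eq_two.1 (herase u2 hu2)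
  obtain ⟨a3, b3, hab3, hE3⟩ := Finset.card_eq_two.1 (herase u3 hu3)
  have hadj : ∀ u a b, ((G.neighborFinset u).erase v) = {a, b} →
      G.Adj u a ∧ G.Adj u b := by
    intro u a b hE
    constructor
    · rw [← SimpleGraph.mem_neighborFinset]
      exact Finset.mem_of_mem_erase (hE ▸ (by simp : a ∈ ({a, b} : Finset V)))
    · rw [← SimpleGraph.mem_neighborFinset]
      exact Finset.mem_of_mem_erase (hE ▸ (by simp : b ∈ ({a, b} : Finset V)))
  obtain ⟨h1a, h1b⟩ := hadj u1 a1 b1 hE1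
  obtain ⟨h2a, h2b⟩ := hadj u2 a2 b2 hE2
  obtain ⟨h3a, h3b⟩ := hadj u3 a3 b3 hE3
  -- ψ : Fin 10 → V maps T3-edges to G-edges
  have homV : ∀ i j : Fin 10, T3.Adj i j →
      G.Adj (psi10 v u1 u2 u3 a1 b1 a2 b2 a3 b3 i) (psi10 v u1 u2 u3 a1 b1 a2 b2 a3 b3 j) := by
    intro i j h
    fin_cases i <;> fin_cases j <;>
      first
        | exact absurd h (by decide)
        | exact hu1 | exact hu1.symm
        | exact hu2 | exact hu2.symm
        | exact hu3 | exact hu3.symm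
        | exact h1a | exact h1a.symm
        | exact h1b | exact h1b.symm
        | exact h2a | exact h2a.symm
        | exact h2b | exact h2b.symm
        | exact h3a | exact h3a.symm
        | exact h3b | exact h3b.symm
  -- the vertex map φ
  let φ : (↑S : Set V) → Fin 10 := fun x =>
    if (x : V) = v then 0
    else if (x : V) = u1 then 1
    else if (x : V) = u2 then 2
    else if (x : V) = u3 then 3
    else if (x : V) ∈ (G.neighborFinset u1).erase v then (if (x : V) = a1 then 4 else 5)
    else if (x : V) ∈ (G.neighborFinset u2).erase v then (if (x : V) = a2 then 6 else 7)
    else if (x : V) ∈ (G.neighborFinset u3).erase v then (if (x : V) = a3 then 8 else 9)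
    else 0
  have hsec : ∀ x : (↑S : Set V), psi10 v u1 u2 u3 a1 b1 a2 b2 a3 b3 (φ x) = (x : V) := by
    intro x
    show psi10 v u1 u2 u3 a1 b1 a2 b2 a3 b3
      (if (x : V) = v then 0
      else if (x : V) = u1 then 1
      else if (x : V) = u2 then 2
      else if (x : V) = u3 then 3
      else if (x : V) ∈ (G.neighborFinset u1).erase v then (if (x : V) = a1 then 4 else 5)
      else if (x : V) ∈ (G.neighborFinset u2).erase v then (if (x : V) = a2 then 6 else 7)
      else if (x : V) ∈ (G.neighborFinset u3).erase v then (if (x : V) = a3 then 8 else 9)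
      else 0) = (x : V)
    split_ifs with e0 e1 e2 e3 m1 ea1 m2 ea2 m3 ea3
    · exact e0.symm
    · exact e1.symm
    · exact e2.symm
    · exact e3.symm
    · exact ea1.symm
    · have h' : (x : V) ∈ ({a1, b1} : Finset V) := hE1 ▸ m1
      simp only [Finset.mem_insert, Finset.mem_singleton] at h'
      rcases h' with h' | h'
      · exact absurd h' ea1
      · exact h'.symm
    · exact ea2.symm
    · have h' : (x : V) ∈ ({a2, b2} : Finset V) := hE2 ▸ m2
      simp only [Finset.mem_insert, Finset.mem_singleton] at h'
      rcases h' with h' | h'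
      · exact absurd h' ea2
      · exact h'.symm
    · exact ea3.symm
    · have h' : (x : V) ∈ ({a3, b3} : Finset V) := hE3 ▸ m3
      simp only [Finset.mem_insert, Finset.mem_singleton] at h'
      rcases h' with h' | h'
      · exact absurd h' ea3
      · exact h'.symm
    · -- unreachable case
      exfalso
      have hxS : (x : V) ∈ S := x.2
      rcases hS _ hxS with h | h | ⟨w, hvw, hwx⟩
      · exact e0 h
      · have h' : (x : V) ∈ G.neighborFinset v := by
          rw [SimpleGraph.mem_neighborFinset]; exact h
        rw [hN] at h'
        simp only [Finset.mem_insert, Finset.mem_singleton] at h'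
        rcases h' with h' | h' | h'
        · exact e1 h'
        · exact e2 h'
        · exact e3 h'
      · have hw : w ∈ ({u1, u2, u3} : Finset V) := by
          rw [← hN, SimpleGraph.mem_neighborFinset]; exact hvw
        have hxw : (x : V) ∈ (G.neighborFinset w).erase v := by
          rw [Finset.mem_erase, SimpleGraph.mem_neighborFinset]
          exact ⟨e0, hwx⟩
        simp only [Finset.mem_insert, Finset.mem_singleton] at hw
        rcases hw with rfl | rfl | rfl
        · exact m1 hxw
        · exact m2 hxw
        · exact m3 hxw
  have hφinj : Function.Injective φ := by
    intro x y h
    have : (x : V) = (y : V) := by rw [← hsec x, ← hsec y, h]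
    exact Subtype.ext this
  have hrefl : ∀ x y : (↑S : Set V), T3.Adj (φ x) (φ y) →
      (SimpleGraph.induce (↑S : Set V) G).Adj x y := by
    intro x y h
    have := homV _ _ h
    rw [hsec x, hsec y] at this
    exact this
  exact aux_transfer (SimpleGraph.induce (↑S : Set V) G) φ hφinj hrefl
end

section
/- For all λ ≥ 0, the quantities y*_0 = λ(1+2λ)/(1+6λ+6λ²) + λ³(1+λ)²/((1+6λ+6λ²)P(λ)), y*_1 = (−1+λ+2λ²)/(1+6λ+6λ²) + (1+7λ+9λ²+λ³)(1+λ)²/((1+6λ+6λ²)P(λ)), y*_2 = 2(1+λ)²/(1+6λ+6λ²) − (2+14λ+21λ²+8λ³)(1+λ)²/((1+6λ+6λ²)P(λ)), y*_3 = (1+λ)³/P(λ), where P(λ) is the independence polynomial of T_3, are all nonnegative and sum to 1. -/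
instance T3.adjDecidable : DecidableRel T3.Adj := fun a b =>
  decidable_of_iff _ (SimpleGraph.fromRel_adj _ a b).symm

/-- independence predicate for `T3` -/
def indepP (I : Finset (Fin 10)) : Prop := ∀ a ∈ I, ∀ b ∈ I, ¬ T3.Adj a b

instance : DecidablePred indepP := fun I =>
  Finset.decidableDforallFinset (p := fun a _ => ∀ b ∈ I, ¬ T3.Adj a b)

set_option maxRecDepth 40000 in
set_option maxHeartbeats 4000000 in
lemma T3_card_multiset :
    ((Finset.univ.filter indepP).val.map Finset.card) =
    ↑[0,1,1,1,2,1,2,2,3,1,2,2,2,3,1,2,2,2,3,2,3,3,3,4,1,2,2,2,3,2,3,3,2,3,3,3,4,4,1,2,2,2,3,2,3,3,2,3,3,3,4,4,2,3,3,3,4,3,4,4,3,4,4,4,5,5,1,2,2,2,3,2,3,3,2,3,3,3,4,4,2,3,3,3,4,3,4,4,5,2,3,3,3,4,3,4,4,5,3,4,4,4,5,4,5,5,6,1,2,2,2,3,2,3,3,2,3,3,3,4,4,2,3,3,3,4,3,4,4,5,2,3,3,3,4,3,4,4,5,3,4,4,4,5,4,5,5,6,2,3,3,3,4,3,4,4,3,4,4,4,5,5,3,4,4,4,5,4,5,5,6,3,4,4,4,5,4,5,5,6,4,5,5,5,6,5,6,6,7]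 := by
  decide

set_option maxRecDepth 40000 in
set_option maxHeartbeats 2000000 in
lemma indepPoly_T3 (x : ℝ) :
    indepPoly T3 x =
      1 + 10*x + 36*x^2 + 60*x^3 + 50*x^4 + 24*x^5 + 7*x^6 + x^7 := by
  have h1 : indepPoly T3 x =
      ∑ I ∈ Finset.univ.filter indepP, x ^ I.card := by
    rw [indepPoly, Finset.sum_filter]
    refine Finset.sum_congr rfl fun I _ => ?_
    by_cases h : indepP I
    · exact (if_pos h).trans (if_pos h).symm
    · exact (if_neg h).trans (if_neg h).symm
  rw [h1, ← Finset.sum_map_val,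
    show (fun I : Finset (Fin 10) => x ^ I.card) = (fun k => x ^ k) ∘ Finset.card
      from rfl,
    ← Multiset.map_map, T3_card_multiset, Multiset.map_coe, Multiset.sum_coe]
  norm_num
  ring

set_option maxHeartbeats 1000000 in
theorem stmt_18 (lam : ℝ) (hlam : 0 ≤ lam) (P : ℝ) (hP : P = indepPoly T3 lam)
    (y0 y1 y2 y3 : ℝ)
    (h0 : y0 = lam * (1 + 2 * lam) / (1 + 6 * lam + 6 * lam ^ 2) +
        lam ^ 3 * (1 + lam) ^ 2 / ((1 + 6 * lam + 6 * lam ^ 2) * P))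
    (h1 : y1 = (-1 + lam + 2 * lam ^ 2) / (1 + 6 * lam + 6 * lam ^ 2) +
        (1 + 7 * lam + 9 * lam ^ 2 + lam ^ 3) * (1 + lam) ^ 2 /
          ((1 + 6 * lam + 6 * lam ^ 2) * P))
    (h2 : y2 = 2 * (1 + lam) ^ 2 / (1 + 6 * lam + 6 * lam ^ 2) -
        (2 + 14 * lam + 21 * lam ^ 2 + 8 * lam ^ 3) * (1 + lam) ^ 2 /
          ((1 + 6 * lam + 6 * lam ^ 2) * P))
    (h3 : y3 = (1 + lam) ^ 3 / P) :
    0 ≤ y0 ∧ 0 ≤ y1 ∧ 0 ≤ y2 ∧ 0 ≤ y3 ∧ y0 + y1 + y2 + y3 = 1 := by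
  have hP' : P = 1 + 10*lam + 36*lam^2 + 60*lam^3 + 50*lam^4 + 24*lam^5
      + 7*lam^6 + lam^7 := by rw [hP, indepPoly_T3]
  have h2l := pow_nonneg hlam 2
  have h3l := pow_nonneg hlam 3
  have h4l := pow_nonneg hlam 4
  have h5l := pow_nonneg hlam 5
  have h6l := pow_nonneg hlam 6
  have h7l := pow_nonneg hlam 7
  have h8l := pow_nonneg hlam 8
  have h9l := pow_nonneg hlam 9
  have hD : (0:ℝ) < 1 + 6 * lam + 6 * lam ^ 2 := by nlinarith
  have hPpos : (0:ℝ) < P := by rw [hP']; nlinarith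
  have hDP : (0:ℝ) < (1 + 6 * lam + 6 * lam ^ 2) * P := mul_pos hD hPpos
  refine ⟨?_, ?_, ?_, ?_, ?_⟩
  · rw [h0]
    have : (0:ℝ) ≤ lam ^ 3 * (1 + lam) ^ 2 :=
      mul_nonneg h3l (sq_nonneg _)
    have : (0:ℝ) ≤ lam * (1 + 2 * lam) := by nlinarith
    positivity
  · rw [h1]
    have e1 : (-1 + lam + 2 * lam ^ 2) / (1 + 6 * lam + 6 * lam ^ 2) +
        (1 + 7 * lam + 9 * lam ^ 2 + lam ^ 3) * (1 + lam) ^ 2 /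
          ((1 + 6 * lam + 6 * lam ^ 2) * P) =
        ((-1 + lam + 2 * lam ^ 2) * P +
          (1 + 7 * lam + 9 * lam ^ 2 + lam ^ 3) * (1 + lam) ^ 2) /
          ((1 + 6 * lam + 6 * lam ^ 2) * P) := by
      field_simp
    rw [e1]
    apply div_nonneg _ hDP.le
    rw [hP']
    nlinarith
  · rw [h2]
    have e2 : 2 * (1 + lam) ^ 2 / (1 + 6 * lam + 6 * lam ^ 2) -
        (2 + 14 * lam + 21 * lam ^ 2 + 8 * lam ^ 3) * (1 + lam) ^ 2 /
          ((1 + 6 * lam + 6 * lam ^ 2) * P) =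
        ((1 + lam) ^ 2 * (2 * P - (2 + 14 * lam + 21 * lam ^ 2 + 8 * lam ^ 3))) /
          ((1 + 6 * lam + 6 * lam ^ 2) * P) := by
      field_simp
    rw [e2]
    apply div_nonneg _ hDP.le
    apply mul_nonneg (sq_nonneg _)
    rw [hP']
    nlinarith
  · rw [h3]
    apply div_nonneg _ hPpos.le
    positivity
  · rw [h0, h1, h2, h3, hP']
    have hD' : (1 + 6 * lam + 6 * lam ^ 2) ≠ 0 := hD.ne'
    have hP0 : (1 + 10*lam + 36*lam^2 + 60*lam^3 + 50*lam^4 + 24*lam^5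
        + 7*lam^6 + lam^7) ≠ 0 := by rw [← hP']; exact hPpos.ne'
    field_simp
    ring
end
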